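/- arXiv:1708.00552 — 3 statements merged into one kernel-verified Lean document; each statement's English description precedes it below -/
import Mathlib

section
/- For every natural number n ≥ 39, let S_n = {2,3,…,n} ∪ {n+2}. The sum graph with loops induced by S_n admits no minimal sum labeling: there is no function ℓ : S_n → ℕ with ℓ(u) ≥ 1 for all u ∈ S_n, satisfying that for all u, v ∈ S_n (not necessarily distinct), u+v ∈ S_n if and only if there exists w ∈ S_n with ℓ(u)+ℓ(v) = ℓ(w), and such that ℓ(u) = 1 for some u ∈ S_n. -/
/-!
A sum labeling `ℓ` of `Sn n` is injective: a vertex `u ≤ n` is adjacent to `n + 2 - u`, and no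
larger vertex is. Let `L` be the label set and `b, c, p, t, q` the labels of `2, 3, n - 1, n, n + 2`.
Every vertex other than `n - 1` and `n + 2` is adjacent to `2`, so every label other than `p, q`
can be increased by `b` inside `L`: the finite set `L` is a union of arithmetic progressions of
difference `b` ending at `p` or `q`. Since `3` is the only neighbour of `n - 1` and `2` the only
neighbour of `n`, this forces `q = p + c`. Modulo `b`, the residues of `0, 1, c, 2c` then all lie
in `{p, p + c}`, which forces `b ∣ 2`; for `b = 1` the set `L` consists of two intervals and for
`b = 2` of two parity classes, and both cases again clash with the neighbours of `n - 1` and `n`.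
-/

/-- `Sn n = {2,3,…,n} ∪ {n+2}`. -/
def Sn (n : ℕ) : Set ℕ := {k | (2 ≤ k ∧ k ≤ n) ∨ k = n + 2}

def IsSumLabeling (S : Set ℕ) (ℓ : ℕ → ℕ) : Prop :=
  (∀ u ∈ S, 1 ≤ ℓ u) ∧ ∀ u ∈ S, ∀ v ∈ S, (u + v ∈ S ↔ ∃ w ∈ S, ℓ u + ℓ v = ℓ w)

theorem Set.Finite.exists_add_mul_mem {L E : Set ℕ} (hL : L.Finite) {b : ℕ} (hb : 0 < b)
    (hstep : ∀ x ∈ L, x ∉ E → x + b ∈ L) {x : ℕ} (hx : x ∈ L) :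
    ∃ k, x + k * b ∈ E ∧ ∀ j ≤ k, x + j * b ∈ L := by
  obtain ⟨B, hB⟩ := hL.bddAbove
  induction hd : B - x using Nat.strong_induction_on generalizing x with
  | _ d ih =>
    by_cases hxE : x ∈ E
    · exact ⟨0, by simpa using hxE, fun j hj => by simpa [Nat.le_zero.mp hj] using hx⟩
    have hxb := hstep x hx hxE
    have := hB hxb
    obtain ⟨k, hkE, hkL⟩ := ih (B - (x + b)) (by omega) hxb rfl
    refine ⟨k + 1, by rwa [add_one_mul, add_comm _ b, ← add_assoc], fun j hj => ?_⟩
    rcases j with _ | j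
    · simpa using hx
    · convert hkL j (by omega) using 1
      ring

theorem two_eq_zero_of_subset_pair {R : Type*} [CommRing R] {P C : R}
    (h : ({0, 1, C, C + C} : Set R) ⊆ {P, P + C}) : (2 : R) = 0 := by
  simp only [Set.insert_subset_iff, Set.mem_insert_iff, Set.mem_singleton_iff,
    Set.singleton_subset_iff] at h
  grind

namespace IsSumLabeling

variable {S : Set ℕ} {ℓ : ℕ → ℕ}

theorem add_mem_image_iff (h : IsSumLabeling S ℓ) {u v : ℕ} (hu : u ∈ S) (hv : v ∈ S) :
    ℓ u + ℓ v ∈ ℓ '' S ↔ u + v ∈ S := by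
  rw [h.2 u hu v hv]
  simp only [Set.mem_image, eq_comm]

theorem add_mem_iff_of_label_eq (h : IsSumLabeling S ℓ) {u v w : ℕ} (hu : u ∈ S) (hv : v ∈ S)
    (hw : w ∈ S) (huv : ℓ u = ℓ v) : u + w ∈ S ↔ v + w ∈ S := by
  rw [← h.add_mem_image_iff hu hw, ← h.add_mem_image_iff hv hw, huv]

end IsSumLabeling

theorem mem_Sn {n k : ℕ} : k ∈ Sn n ↔ (2 ≤ k ∧ k ≤ n) ∨ k = n + 2 := Iff.rfl

theorem finite_Sn (n : ℕ) : (Sn n).Finite :=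
  (Set.finite_Iic (n + 2)).subset fun k hk => by
    rw [mem_Sn] at hk
    rw [Set.mem_Iic]
    omega

namespace IsSumLabeling

variable {n : ℕ} {ℓ : ℕ → ℕ}

theorem le_of_label_eq (h : IsSumLabeling (Sn n) ℓ) {u v : ℕ} (hu : u ∈ Sn n) (hun : u ≤ n)
    (hv : v ∈ Sn n) (huv : ℓ u = ℓ v) : v ≤ u := by
  rw [mem_Sn] at hu
  -- `u + (n + 2 - u)` is the top vertex, so `v + (n + 2 - u) ∈ Sn n` forces `v ≤ u`
  have hw : n + 2 - u ∈ Sn n := mem_Sn.2 (by omega)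
  have hvw := (h.add_mem_iff_of_label_eq (mem_Sn.2 (by omega)) hv hw huv).1 (mem_Sn.2 (by omega))
  rw [mem_Sn] at hvw
  omega

theorem injOn_Sn (h : IsSumLabeling (Sn n) ℓ) : Set.InjOn ℓ (Sn n) := by
  intro u hu v hv huv
  have hvu := fun hun => h.le_of_label_eq hu hun hv huv
  have huv := fun hvn => h.le_of_label_eq hv hvn hu huv.symm
  rw [mem_Sn] at hu hv
  omega

end IsSumLabeling

/-- The facts about the label set `L = ℓ '' Sn n` of a minimal sum labeling `ℓ` of `Sn n` that
rule it out, where `b, c, p, t, q` stand for `ℓ 2, ℓ 3, ℓ (n - 1), ℓ n, ℓ (n + 2)`. -/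
structure SnLabels (L : Set ℕ) (b c p t q : ℕ) : Prop where
  finite : L.Finite
  pos : ∀ x ∈ L, 0 < x
  one_mem : 1 ∈ L
  b_mem : b ∈ L
  c_mem : c ∈ L
  p_mem : p ∈ L
  t_mem : t ∈ L
  add_b_mem : ∀ x ∈ L, x ≠ p → x ≠ q → x + b ∈ L
  p_add_c_mem : p + c ∈ L
  b_add_b_mem : b + b ∈ L
  c_add_c_mem : c + c ∈ L
  t_add_b_mem : t + b ∈ L
  eq_c_of_p_add_mem : ∀ x ∈ L, p + x ∈ L → x = c
  eq_b_of_t_add_mem : ∀ x ∈ L, t + x ∈ L → x = b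
  b_ne_c : b ≠ c
  c_ne_p : c ≠ p
  c_ne_q : c ≠ q

namespace SnLabels

variable {L : Set ℕ} {b c p t q : ℕ} (H : SnLabels L b c p t q)
include H

theorem b_pos : 0 < b := H.pos b H.b_mem

theorem exists_chain {x : ℕ} (hx : x ∈ L) :
    ∃ e, (e = p ∨ e = q) ∧ x ≤ e ∧ e ≡ x [MOD b] ∧
      ∀ y, x ≤ y → y ≤ e → y ≡ x [MOD b] → y ∈ L := by
  obtain ⟨k, hkE, hkL⟩ := H.finite.exists_add_mul_mem (E := {p, q}) H.b_pos
    (fun y hy hyE => H.add_b_mem y hy (fun h => hyE (by simp [h])) (fun h => hyE (by simp [h]))) hx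
  refine ⟨x + k * b, by simpa using hkE, by omega, Nat.add_mul_mod_self_right x k b,
    fun y hxy hye hyx => ?_⟩
  obtain ⟨j, hj⟩ := (Nat.modEq_iff_dvd' hxy).1 hyx.symm
  have hjk : j ≤ k := Nat.le_of_mul_le_mul_left (by rw [mul_comm b k]; omega) H.b_pos
  convert hkL j hjk using 1
  rw [mul_comm]
  omega

theorem p_add_c_eq_q : p + c = q := by
  by_contra hq
  have hcb := H.add_b_mem c H.c_mem H.c_ne_p H.c_ne_q
  have hpcb := H.add_b_mem (p + c) H.p_add_c_mem (by have := H.pos c H.c_mem; omega) hq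
  have := H.eq_c_of_p_add_mem (c + b) hcb (by rwa [← add_assoc])
  have := H.b_pos
  omega

theorem p_lt_q : p < q := by
  have := H.pos c H.c_mem
  have := H.p_add_c_eq_q
  omega

theorem le_q {x : ℕ} (hx : x ∈ L) : x ≤ q := by
  obtain ⟨e, he, hxe, -⟩ := H.exists_chain hx
  have := H.p_lt_q
  omega

theorem t_ne_p : t ≠ p := by
  rintro rfl
  exact H.b_ne_c ((H.eq_b_of_t_add_mem c H.c_mem H.p_add_c_mem).symm)

theorem b_ne_one : b ≠ 1 := by
  intro hb
  have hq := H.p_add_c_eq_q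
  have hc : 2 ≤ c := by have := H.pos c H.c_mem; have := H.b_ne_c; omega
  have mem_of_le_p : ∀ y, 1 ≤ y → y ≤ p → y ∈ L := by
    obtain ⟨e, he, h1e, -, hL⟩ := H.exists_chain H.one_mem
    have := H.p_lt_q
    exact fun y h1y hyp => hL y h1y (by omega) (by simp [hb, Nat.modEq_one])
  have mem_of_p_lt : ∀ x ∈ L, p < x → ∀ y, x ≤ y → y ≤ q → y ∈ L := by
    intro x hx hpx y hxy hyq
    obtain ⟨e, he, hxe, -, hL⟩ := H.exists_chain hx
    exact hL y hxy (by omega) (by simp [hb, Nat.modEq_one])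
  rcases lt_or_gt_of_ne H.c_ne_p with hcp | hpc
  · have hq1 : q - 1 ∉ L := fun h => by
      have := H.eq_c_of_p_add_mem (c - 1) (mem_of_le_p _ (by omega) (by omega))
        (by rwa [← Nat.add_sub_assoc (by omega), hq])
      omega
    have htp : t < p := by
      have := H.t_ne_p
      have := H.le_q H.t_add_b_mem
      by_contra! hpt
      exact hq1 (mem_of_p_lt t H.t_mem (by omega) _ (by omega) (by omega))
    have hpt := H.eq_b_of_t_add_mem (p - t) (mem_of_le_p _ (by omega) (by omega))
      (by rw [Nat.add_sub_cancel' htp.le]; exact H.p_mem)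
    have := H.eq_b_of_t_add_mem (c + b) (H.add_b_mem c H.c_mem H.c_ne_p H.c_ne_q)
      (by convert H.p_add_c_mem using 1; omega)
    omega
  · have := H.le_q H.c_add_c_mem
    omega

theorem not_p_modEq_q (hb : b = 2) : ¬ p ≡ q [MOD 2] := by
  obtain ⟨e₁, he₁, -, h₁, -⟩ := H.exists_chain H.one_mem
  obtain ⟨e₂, he₂, -, h₂, -⟩ := H.exists_chain H.b_mem
  subst hb
  unfold Nat.ModEq at *
  omega

theorem mem_of_modEq_q (hb : b = 2) {y : ℕ} (h1y : 1 ≤ y) (hyq : y ≤ q) (hy : y ≡ q [MOD 2]) :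
    y ∈ L := by
  have hpq := H.not_p_modEq_q hb
  obtain ⟨r, hr, hry, hyr⟩ : ∃ r ∈ L, r ≤ y ∧ y ≡ r [MOD 2] := by
    rcases Nat.mod_two_eq_zero_or_one y with h | h
    · exact ⟨b, H.b_mem, by omega, by rw [hb]; unfold Nat.ModEq; omega⟩
    · exact ⟨1, H.one_mem, h1y, by unfold Nat.ModEq; omega⟩
  obtain ⟨e, he, -, her, hL⟩ := H.exists_chain hr
  subst hb
  unfold Nat.ModEq at *
  exact hL y hry (by omega) hyr

theorem b_ne_two : b ≠ 2 := by
  intro hb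
  have hq := H.p_add_c_eq_q
  have hpq := H.not_p_modEq_q hb
  have htq := H.le_q H.t_add_b_mem
  have ht1 : t + 1 ∉ L := fun h => by
    have := H.eq_b_of_t_add_mem 1 H.one_mem h
    omega
  obtain ⟨e, he, -, het, -⟩ := H.exists_chain H.t_mem
  rcases he with he | he <;> rw [he] at het
  · exact ht1 (H.mem_of_modEq_q hb (by omega) (by omega)
      (by rw [hb] at het; unfold Nat.ModEq at *; omega))
  · have htq2 : t + 2 = q := by
      by_contra hne
      have htb := H.add_b_mem _ H.t_add_b_mem (by rw [hb] at het ⊢; unfold Nat.ModEq at *; omega)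
        (by omega)
      have := H.eq_b_of_t_add_mem (b + b) H.b_add_b_mem (by rwa [← add_assoc])
      omega
    have hc := H.eq_c_of_p_add_mem 1 H.one_mem (H.mem_of_modEq_q hb (by omega)
      (by have := H.p_lt_q; omega) (by unfold Nat.ModEq at *; omega))
    exact ht1 (by convert H.p_mem using 1; omega)

theorem b_le_two : b ≤ 2 := by
  have hcast : ∀ x ∈ L, (x : ZMod b) ∈ ({(p : ZMod b), (p : ZMod b) + c} : Set (ZMod b)) := by
    intro x hx
    obtain ⟨e, he, -, hex, -⟩ := H.exists_chain hx
    rw [← Nat.cast_add, H.p_add_c_eq_q]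
    rcases he with rfl | rfl
    · exact Or.inl ((ZMod.natCast_eq_natCast_iff _ _ _).2 hex.symm)
    · exact Or.inr ((ZMod.natCast_eq_natCast_iff _ _ _).2 hex.symm)
  have h2 : (2 : ZMod b) = 0 := two_eq_zero_of_subset_pair (by
    simp only [Set.insert_subset_iff, Set.singleton_subset_iff]
    refine ⟨?_, ?_, hcast c H.c_mem, ?_⟩
    · simpa using hcast b H.b_mem
    · simpa using hcast 1 H.one_mem
    · simpa using hcast (c + c) H.c_add_c_mem)
  exact Nat.le_of_dvd two_pos ((ZMod.natCast_eq_zero_iff 2 b).1 (by exact_mod_cast h2))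

end SnLabels

theorem not_snLabels {L : Set ℕ} {b c p t q : ℕ} : ¬ SnLabels L b c p t q := fun H => by
  have := H.b_pos
  have := H.b_ne_one
  have := H.b_ne_two
  have := H.b_le_two
  omega

theorem IsSumLabeling.snLabels {n : ℕ} {ℓ : ℕ → ℕ} (h : IsSumLabeling (Sn n) ℓ) (hn : 6 ≤ n)
    (h1 : 1 ∈ ℓ '' Sn n) :
    SnLabels (ℓ '' Sn n) (ℓ 2) (ℓ 3) (ℓ (n - 1)) (ℓ n) (ℓ (n + 2)) where
  finite := (finite_Sn n).image ℓ
  pos := by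
    rintro _ ⟨u, hu, rfl⟩
    exact h.1 u hu
  one_mem := h1
  b_mem := Set.mem_image_of_mem ℓ (mem_Sn.2 (by omega))
  c_mem := Set.mem_image_of_mem ℓ (mem_Sn.2 (by omega))
  p_mem := Set.mem_image_of_mem ℓ (mem_Sn.2 (by omega))
  t_mem := Set.mem_image_of_mem ℓ (mem_Sn.2 (by omega))
  add_b_mem := by
    rintro _ ⟨w, hw, rfl⟩ hwp hwq
    have hwp := ne_of_apply_ne ℓ hwp
    have hwq := ne_of_apply_ne ℓ hwq
    rw [mem_Sn] at hw
    exact (h.add_mem_image_iff (mem_Sn.2 hw) (mem_Sn.2 (by omega))).2 (mem_Sn.2 (by omega))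
  p_add_c_mem := (h.add_mem_image_iff (mem_Sn.2 (by omega)) (mem_Sn.2 (by omega))).2
    (mem_Sn.2 (by omega))
  b_add_b_mem := (h.add_mem_image_iff (mem_Sn.2 (by omega)) (mem_Sn.2 (by omega))).2
    (mem_Sn.2 (by omega))
  c_add_c_mem := (h.add_mem_image_iff (mem_Sn.2 (by omega)) (mem_Sn.2 (by omega))).2
    (mem_Sn.2 (by omega))
  t_add_b_mem := (h.add_mem_image_iff (mem_Sn.2 (by omega)) (mem_Sn.2 (by omega))).2
    (mem_Sn.2 (by omega))
  eq_c_of_p_add_mem := by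
    rintro _ ⟨v, hv, rfl⟩ hpv
    have hpv := (h.add_mem_image_iff (mem_Sn.2 (by omega)) hv).1 hpv
    rw [mem_Sn] at hv hpv
    rw [show v = 3 by omega]
  eq_b_of_t_add_mem := by
    rintro _ ⟨v, hv, rfl⟩ htv
    have htv := (h.add_mem_image_iff (mem_Sn.2 (by omega)) hv).1 htv
    rw [mem_Sn] at hv htv
    rw [show v = 2 by omega]
  b_ne_c := h.injOn_Sn.ne (mem_Sn.2 (by omega)) (mem_Sn.2 (by omega)) (by omega)
  c_ne_p := h.injOn_Sn.ne (mem_Sn.2 (by omega)) (mem_Sn.2 (by omega)) (by omega)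
  c_ne_q := h.injOn_Sn.ne (mem_Sn.2 (by omega)) (mem_Sn.2 (by omega)) (by omega)

/-- For every `n ≥ 39`, the sum graph with loops induced by `Sn n` admits
no minimal sum labeling. -/
theorem no_minimal_labeling_An (n : ℕ) (hn : 39 ≤ n) :
    ¬ ∃ ℓ : ℕ → ℕ,
      (∀ u ∈ Sn n, 1 ≤ ℓ u) ∧
      (∀ u ∈ Sn n, ∀ v ∈ Sn n,
        (u + v ∈ Sn n ↔ ∃ w ∈ Sn n, ℓ u + ℓ v = ℓ w)) ∧
      (∃ u ∈ Sn n, ℓ u = 1) := by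
  rintro ⟨ℓ, hpos, hadj, u, hu, hu1⟩
  exact not_snLabels (IsSumLabeling.snLabels ⟨hpos, hadj⟩ (by omega) ⟨u, hu, hu1⟩)
end

section
/- Let M be a finite set of positive integers, let d₁, d₂ ≥ 1 and t₁, t₂ ≥ 2 be integers. Let F₁ be a finite family of pairwise distinct arithmetic progressions, each with difference d₁, whose union is M, with |F₁| ≤ t₁, and such that if |F₁| = t₁ then the singleton {d₁} belongs to F₁. Let F₂ be a finite family of pairwise distinct arithmetic progressions, each with difference d₂, whose union is M, with |F₂| ≤ t₂, and such that if |F₂| = t₂ then the singleton {d₂} belongs to F₂. If |M| ≥ 2·(t₁−1)·(t₂−1) + 3, then there exist P₁ ∈ F₁ and P₂ ∈ F₂ such that |P₁ ∩ P₂| ≥ 3. -/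
/-!
Removing the singleton `{dᵢ}` from a family that has the full `tᵢ` members leaves at most
`tᵢ - 1` sets covering `M \ {dᵢ}`. Every point of `M \ {d₁, d₂}` then lies in some `P₁ ∩ P₂`
with `P₁, P₂` from the two reduced families; if all these intersections had at most two
points, `M` would have at most `2 (t₁ - 1) (t₂ - 1) + 2` elements.
-/

/-- `P` is an arithmetic progression with difference `d`:
`P = {a, a + d, …, a + t * d}` for some `a ≥ 1` and `t ≥ 0`. -/
def IsAP (d : ℕ) (P : Set ℕ) : Prop :=
  ∃ a t : ℕ, 1 ≤ a ∧ P = {x : ℕ | ∃ i ≤ t, x = a + i * d}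

section Covers

variable {α : Type*}

lemma exists_subset_card_le_pred_sdiff_singleton_subset_biUnion [DecidableEq (Set α)]
    {M : Set α} {F : Finset (Set α)} {t : ℕ} {d : α} (hF : M ⊆ ⋃ P ∈ F, P)
    (hcard : F.card ≤ t) (hsing : F.card = t → ({d} : Set α) ∈ F) :
    ∃ G ⊆ F, G.card ≤ t - 1 ∧ M \ {d} ⊆ ⋃ P ∈ G, P := by
  by_cases h : F.card = t
  · refine ⟨F.erase {d}, F.erase_subset _, by rw [Finset.card_erase_of_mem (hsing h), h], ?_⟩
    rintro x ⟨hxM, hxd⟩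
    obtain ⟨P, hP, hxP⟩ := Set.mem_iUnion₂.mp (hF hxM)
    have hPd : P ≠ {d} := by rintro rfl; exact hxd hxP
    exact Set.mem_iUnion₂.mpr ⟨P, Finset.mem_erase.mpr ⟨hPd, hP⟩, hxP⟩
  · exact ⟨F, subset_rfl, by omega, Set.sdiff_subset.trans hF⟩

lemma ncard_le_card_mul_card_mul_of_subset_biUnion {S : Set α} {G₁ G₂ : Finset (Set α)}
    {k : ℕ} (h₁ : S ⊆ ⋃ P ∈ G₁, P) (h₂ : S ⊆ ⋃ Q ∈ G₂, Q)
    (hk : ∀ P ∈ G₁, ∀ Q ∈ G₂, (S ∩ (P ∩ Q)).ncard ≤ k) :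
    S.ncard ≤ G₁.card * G₂.card * k := by
  have hS : S = ⋃ PQ ∈ G₁ ×ˢ G₂, S ∩ (PQ.1 ∩ PQ.2) := by
    refine subset_antisymm (fun x hx => ?_) (Set.iUnion₂_subset fun _ _ => Set.inter_subset_left)
    obtain ⟨P, hP, hxP⟩ := Set.mem_iUnion₂.mp (h₁ hx)
    obtain ⟨Q, hQ, hxQ⟩ := Set.mem_iUnion₂.mp (h₂ hx)
    exact Set.mem_iUnion₂.mpr ⟨(P, Q), Finset.mem_product.mpr ⟨hP, hQ⟩, hx, hxP, hxQ⟩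
  calc S.ncard = (⋃ PQ ∈ G₁ ×ˢ G₂, S ∩ (PQ.1 ∩ PQ.2)).ncard := congrArg _ hS
    _ ≤ ∑ PQ ∈ G₁ ×ˢ G₂, (S ∩ (PQ.1 ∩ PQ.2)).ncard := Finset.set_ncard_biUnion_le _ _
    _ ≤ ∑ _PQ ∈ G₁ ×ˢ G₂, k :=
        Finset.sum_le_sum fun PQ hPQ =>
          hk _ (Finset.mem_product.mp hPQ).1 _ (Finset.mem_product.mp hPQ).2
    _ = G₁.card * G₂.card * k := by simp [Finset.card_product]

end Covers

theorem covers_merge_general (M : Set ℕ) (hMfin : M.Finite) (d₁ d₂ t₁ t₂ : ℕ) (F₁ : Finset (Set ℕ))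
    (hF₁U : M = ⋃ P ∈ F₁, P) (hF₁card : F₁.card ≤ t₁)
    (hF₁sing : F₁.card = t₁ → ({d₁} : Set ℕ) ∈ F₁)
    (F₂ : Finset (Set ℕ)) (hF₂U : M = ⋃ P ∈ F₂, P) (hF₂card : F₂.card ≤ t₂)
    (hF₂sing : F₂.card = t₂ → ({d₂} : Set ℕ) ∈ F₂)
    (hM : 2 * (t₁ - 1) * (t₂ - 1) + 3 ≤ M.ncard) :
    ∃ P₁ ∈ F₁, ∃ P₂ ∈ F₂, 3 ≤ (P₁ ∩ P₂).ncard := by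
  classical
  by_contra! hsmall
  obtain ⟨G₁, hG₁F, hG₁card, hG₁⟩ :=
    exists_subset_card_le_pred_sdiff_singleton_subset_biUnion hF₁U.subset hF₁card hF₁sing
  obtain ⟨G₂, hG₂F, hG₂card, hG₂⟩ :=
    exists_subset_card_le_pred_sdiff_singleton_subset_biUnion hF₂U.subset hF₂card hF₂sing
  have hS : (M \ {d₁, d₂}).ncard ≤ G₁.card * G₂.card * 2 := by
    refine ncard_le_card_mul_card_mul_of_subset_biUnion
      ((Set.sdiff_subset_sdiff_right (by simp)).trans hG₁)
      ((Set.sdiff_subset_sdiff_right (by simp)).trans hG₂) fun P hP Q hQ => ?_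
    have hPM : P ⊆ M := hF₁U ▸ Set.subset_biUnion_of_mem (u := id) (hG₁F hP)
    calc (M \ {d₁, d₂} ∩ (P ∩ Q)).ncard ≤ (P ∩ Q).ncard :=
          Set.ncard_le_ncard Set.inter_subset_right
            (hMfin.subset (Set.inter_subset_left.trans hPM))
      _ ≤ 2 := Nat.le_of_lt_succ (hsmall P (hG₁F hP) Q (hG₂F hQ))
  have hpair : ({d₁, d₂} : Set ℕ).ncard ≤ 2 :=
    (Set.ncard_insert_le _ _).trans (by simp)
  have hG : G₁.card * G₂.card ≤ (t₁ - 1) * (t₂ - 1) := Nat.mul_le_mul hG₁card hG₂card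
  have hsplit := Set.ncard_le_ncard_sdiff_add_ncard M {d₁, d₂}
  linarith

/-- Two sufficiently tight covers of a large set `M` of positive integers by
arithmetic progressions must contain two progressions sharing at least three
elements. -/
theorem covers_merge (M : Set ℕ) (hMfin : M.Finite) (hMpos : ∀ x ∈ M, 1 ≤ x)
    (d₁ d₂ t₁ t₂ : ℕ) (hd₁ : 1 ≤ d₁) (hd₂ : 1 ≤ d₂) (ht₁ : 2 ≤ t₁) (ht₂ : 2 ≤ t₂)
    (F₁ : Finset (Set ℕ)) (hF₁AP : ∀ P ∈ F₁, IsAP d₁ P)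
    (hF₁U : M = ⋃ P ∈ F₁, P) (hF₁card : F₁.card ≤ t₁)
    (hF₁sing : F₁.card = t₁ → ({d₁} : Set ℕ) ∈ F₁)
    (F₂ : Finset (Set ℕ)) (hF₂AP : ∀ P ∈ F₂, IsAP d₂ P)
    (hF₂U : M = ⋃ P ∈ F₂, P) (hF₂card : F₂.card ≤ t₂)
    (hF₂sing : F₂.card = t₂ → ({d₂} : Set ℕ) ∈ F₂)
    (hM : 2 * (t₁ - 1) * (t₂ - 1) + 3 ≤ M.ncard) :
    ∃ P₁ ∈ F₁, ∃ P₂ ∈ F₂, 3 ≤ (P₁ ∩ P₂).ncard :=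
  covers_merge_general M hMfin d₁ d₂ t₁ t₂ F₁ hF₁U hF₁card hF₁sing F₂ hF₂U hF₂card hF₂sing hM
end

section
/- For every natural number n ≥ 39, every admissible multiplicity function m, and every choice of vertices v_k ∈ ψ(k) of G(n,m) for k = 2, 3, 4, 5, 6: the intersection of the proper-terminal sets τ(v₂) ∩ τ(v₃) ∩ τ(v₄) ∩ τ(v₅) ∩ τ(v₆) equals the one-element set {(n+2, 0)}, the unique vertex induced by the highest value n+2. -/
/-- `m` is an admissible multiplicity function for `Sn n`. -/
def Admissible (n : ℕ) (m : ℕ → ℕ) : Prop :=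
  (∀ i ∈ Sn n, 2 * i ∈ Sn n → 2 ≤ m i) ∧
  (∀ i ∈ Sn n, 2 * i ∉ Sn n → m i = 1) ∧
  (∀ i, i ∉ Sn n → m i = 0)

/-- The vertex set of `G(n,m)`: pairs `(i,j)` with `i ∈ Sn n` and `j < m i`. -/
def Vnm (n : ℕ) (m : ℕ → ℕ) : Set (ℕ × ℕ) := {p | p.1 ∈ Sn n ∧ p.2 < m p.1}

/-- Distinct vertices `u`, `v` of `G(n,m)` are adjacent iff `u.1 + v.1 ∈ Sn n`. -/
def AdjG (n : ℕ) (u v : ℕ × ℕ) : Prop := u ≠ v ∧ u.1 + v.1 ∈ Sn n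

/-- `psi m i` is the set of vertices induced by the integer `i`. -/
def psi (m : ℕ → ℕ) (i : ℕ) : Set (ℕ × ℕ) := {p | p.1 = i ∧ p.2 < m i}

/-- The set of proper terminals of a vertex `v` of `G(n,m)`. -/
def tau (n : ℕ) (m : ℕ → ℕ) (v : ℕ × ℕ) : Set (ℕ × ℕ) :=
  {w ∈ Vnm n m | w ≠ v ∧ v.1 + w.1 ∉ Sn n}

/-- A (possibly non-injective) sum labeling of the graph `G(n,m)`. -/
def IsSumLabelingG (n : ℕ) (m : ℕ → ℕ) (ℓ : ℕ × ℕ → ℕ) : Prop :=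
  (∀ v ∈ Vnm n m, 1 ≤ ℓ v) ∧
  ∀ u ∈ Vnm n m, ∀ v ∈ Vnm n m, u ≠ v →
    (AdjG n u v ↔ ∃ w ∈ Vnm n m, ℓ u + ℓ v = ℓ w)

/-!
If `a ∈ S_n` and `a + 2 ∉ S_n`, then `a ∈ {n - 1, n + 2}`, and `a = n - 1` is excluded by
`a + 3 ∉ S_n`; so the terminals of `v₂` and `v₃` alone already force the level `n + 2`, on
which `(n + 2, 0)` is the only vertex because `2 (n + 2) ∉ S_n`. Conversely `n + 2 + k ∉ S_n`
for every `k ≥ 1`, and `n + 2 > 6` keeps `(n + 2, 0)` distinct from the `v_k`.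
-/

section

variable {n : ℕ} {m : ℕ → ℕ}

theorem add_two_mem_Sn (n : ℕ) : n + 2 ∈ Sn n := Or.inr rfl

theorem add_two_add_notMem_Sn {k : ℕ} (hk : 1 ≤ k) : n + 2 + k ∉ Sn n := by
  simp only [Sn, Set.mem_ofPred_eq]
  omega

theorem eq_add_two_of_two_add_notMem_Sn_of_three_add_notMem_Sn {a : ℕ} (ha : a ∈ Sn n)
    (ha₂ : 2 + a ∉ Sn n) (ha₃ : 3 + a ∉ Sn n) : a = n + 2 := by
  simp only [Sn, Set.mem_ofPred_eq] at ha ha₂ ha₃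
  omega

theorem Admissible.apply_add_two (hm : Admissible n m) : m (n + 2) = 1 :=
  hm.2.1 (n + 2) (add_two_mem_Sn n) (by simp only [Sn, Set.mem_ofPred_eq]; omega)

theorem Admissible.add_two_zero_mem_Vnm (hm : Admissible n m) : (n + 2, 0) ∈ Vnm n m :=
  ⟨add_two_mem_Sn n, by rw [hm.apply_add_two]; exact Nat.one_pos⟩

theorem Admissible.add_two_zero_mem_tau (hm : Admissible n m) {v : ℕ × ℕ} (hv : 1 ≤ v.1)
    (hvn : v.1 ≠ n + 2) : (n + 2, 0) ∈ tau n m v := by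
  refine ⟨hm.add_two_zero_mem_Vnm, fun h => hvn (congrArg Prod.fst h).symm, ?_⟩
  rw [add_comm]
  exact add_two_add_notMem_Sn hv

theorem eq_add_two_zero_of_mem_tau_inter_tau (hm : Admissible n m) {v₂ v₃ w : ℕ × ℕ}
    (hv₂ : v₂.1 = 2) (hv₃ : v₃.1 = 3) (hw : w ∈ tau n m v₂ ∩ tau n m v₃) :
    w = (n + 2, 0) := by
  obtain ⟨⟨⟨hwS, hwm⟩, -, hw₂⟩, -, -, hw₃⟩ := hw
  rw [hv₂] at hw₂
  rw [hv₃] at hw₃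
  have hw₁ := eq_add_two_of_two_add_notMem_Sn_of_three_add_notMem_Sn hwS hw₂ hw₃
  rw [hw₁, hm.apply_add_two] at hwm
  exact Prod.ext hw₁ (Nat.lt_one_iff.mp hwm)

end

/-- For `n ≥ 39`, any admissible `m`, and any choice of vertices
`v_k ∈ ψ(k)` for `k = 2,…,6`, the intersection of their proper-terminal sets
is exactly the vertex `(n+2, 0)` induced by the highest value. -/
theorem common_proper_terminal (n : ℕ) (hn : 39 ≤ n) (m : ℕ → ℕ)
    (hm : Admissible n m) (v₂ v₃ v₄ v₅ v₆ : ℕ × ℕ)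
    (h₂ : v₂ ∈ psi m 2) (h₃ : v₃ ∈ psi m 3) (h₄ : v₄ ∈ psi m 4)
    (h₅ : v₅ ∈ psi m 5) (h₆ : v₆ ∈ psi m 6) :
    tau n m v₂ ∩ tau n m v₃ ∩ tau n m v₄ ∩ tau n m v₅ ∩ tau n m v₆ =
      {((n + 2 : ℕ), (0 : ℕ))} := by
  ext w
  constructor
  · intro hw
    exact eq_add_two_zero_of_mem_tau_inter_tau hm h₂.1 h₃.1 ⟨hw.1.1.1.1, hw.1.1.1.2⟩
  · rintro rfl
    have top_mem {v : ℕ × ℕ} (hv₁ : 1 ≤ v.1) (hv₆ : v.1 ≤ 6) : (n + 2, 0) ∈ tau n m v :=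
      hm.add_two_zero_mem_tau hv₁ (by omega)
    refine ⟨⟨⟨⟨top_mem ?_ ?_, top_mem ?_ ?_⟩, top_mem ?_ ?_⟩, top_mem ?_ ?_⟩, top_mem ?_ ?_⟩ <;>
      simp [h₂.1, h₃.1, h₄.1, h₅.1, h₆.1]
end
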